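/- Let k be a field and Λ a finite-dimensional local k-algebra with radical J. Suppose u ∈ J is a nonzero element with J·u = 0. Let N be a (k,Λ)-bimodule with N·u = 0, finite-dimensional over k, and let C = [[Λ,0],[N,k]] be the triangular matrix algebra. Then the simple C-module S₁ corresponding to the idempotent e₁ = [[1,0],[0,0]] is isomorphic to a first syzygy Ω_C(X) of some finitely generated C-module X; consequently del_C(S₁) = 0. -/

import Mathlib

open MulOpposite

section Tri
variable (R S N : Type) [Ring R] [Ring S]
  [AddCommGroup N] [Module S N] [Module Rᵐᵒᵖ N] [SMulCommClass S Rᵐᵒᵖ N]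

/-- Lower triangular matrix ring [[R, 0],[N, S]]: elements (r, n, s). -/
def LTri : Type := R × N × S

instance : AddCommGroup (LTri R S N) := inferInstanceAs (AddCommGroup (R × N × S))

instance instLRing : Ring (LTri R S N) :=
  { (inferInstanceAs (AddCommGroup (R × N × S)) : AddCommGroup (R × N × S)) with
    mul := fun x y => (x.1 * y.1, op y.1 • x.2.1 + x.2.2 • y.2.1, x.2.2 * y.2.2)
    one := (1, 0, 1)
    mul_assoc := by
      rintro ⟨r,n,s⟩ ⟨r',n',s'⟩ ⟨r'',n'',s''⟩
      refine Prod.ext (mul_assoc ..) (Prod.ext ?_ (mul_assoc ..))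
      show op r'' • (op r' • n + s • n') + (s*s') • n''
          = op (r'*r'') • n + s • (op r'' • n' + s' • n'')
      simp [mul_smul, smul_add, smul_comm (M := S) (N := Rᵐᵒᵖ)]
      abel
    one_mul := by
      rintro ⟨r,n,s⟩
      refine Prod.ext (one_mul _) (Prod.ext ?_ (one_mul _))
      show op r • (0:N) + (1:S) • n = n; simp
    mul_one := by
      rintro ⟨r,n,s⟩
      refine Prod.ext (mul_one _) (Prod.ext ?_ (mul_one _))
      show op (1:R) • n + s • (0:N) = n; simp
    left_distrib := by
      rintro ⟨r,n,s⟩ ⟨r',n',s'⟩ ⟨r'',n'',s''⟩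
      refine Prod.ext (mul_add ..) (Prod.ext ?_ (mul_add ..))
      show op (r' + r'') • n + s • (n' + n'')
          = (op r' • n + s • n') + (op r'' • n + s • n'')
      simp [smul_add, add_smul]; abel
    right_distrib := by
      rintro ⟨r,n,s⟩ ⟨r',n',s'⟩ ⟨r'',n'',s''⟩
      refine Prod.ext (add_mul ..) (Prod.ext ?_ (add_mul ..))
      show op r'' • (n + n') + (s + s') • n''
          = (op r'' • n + s • n'') + (op r'' • n' + s' • n'')
      simp [smul_add, add_smul]; abel
    zero_mul := by
      rintro ⟨r,n,s⟩
      refine Prod.ext (zero_mul _) (Prod.ext ?_ (zero_mul _))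
      show op r • (0:N) + (0:S) • n = 0; simp
    mul_zero := by
      rintro ⟨r,n,s⟩
      refine Prod.ext (mul_zero _) (Prod.ext ?_ (mul_zero _))
      show op (0:R) • n + s • (0:N) = 0; simp }

/-- Build an element of the lower triangular ring from its entries. -/
def LTri.mk (r : R) (n : N) (s : S) : LTri R S N := (r, n, s)

end Tri

variable (A : Type) [Ring A]

/-- `p : P → M` is a projective cover: `P` is projective, `p` is surjective and
its kernel is superfluous (small) in `P`. -/
def IsProjCover {P M : Type} [AddCommGroup P] [Module A P]
    [AddCommGroup M] [Module A M] (p : P →ₗ[A] M) : Prop :=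
  Module.Projective A P ∧ Function.Surjective p ∧
    ∀ L : Submodule A P, LinearMap.ker p ⊔ L = ⊤ → L = ⊤

/-- `S` is a (first) syzygy of `M`: `S` is isomorphic to the kernel of a
projective cover of `M`. -/
def IsSyzygyOf (S M : ModuleCat.{0} A) : Prop :=
  ∃ (P : ModuleCat.{0} A) (p : P →ₗ[A] M),
    IsProjCover A p ∧ Nonempty (S ≃ₗ[A] LinearMap.ker p)

/-- `S` is an `n`-th syzygy of `M`, i.e. `S ≅ Ω_A^n(M)`. -/
def IsNthSyzygyOf : ℕ → ModuleCat.{0} A → ModuleCat.{0} A → Prop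
  | 0, S, M => Nonempty (S ≃ₗ[A] M)
  | n + 1, S, M => ∃ T : ModuleCat.{0} A, IsSyzygyOf A T M ∧ IsNthSyzygyOf n S T

/-- A linear map factors through a projective module. -/
def FactorsThroughProj {X Y : Type} [AddCommGroup X] [Module A X]
    [AddCommGroup Y] [Module A Y] (f : X →ₗ[A] Y) : Prop :=
  ∃ (P : ModuleCat.{0} A), Module.Projective A P ∧
    ∃ (u : X →ₗ[A] P) (v : P →ₗ[A] Y), f = v ∘ₗ u

/-- `X` is a direct summand of `Y` in the stable module category:
there are maps `i, p` with `p ∘ i = id` modulo maps factoring through projectives. -/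
def IsStableSummand (X Y : ModuleCat.{0} A) : Prop :=
  ∃ (i : X →ₗ[A] Y) (p : Y →ₗ[A] X),
    FactorsThroughProj A (p ∘ₗ i - LinearMap.id)

/-- The delooping level of a module `M`: the least `n` such that `Ω^n(M)` is a
stable direct summand of `Ω^{n+1}(N)` for some finitely generated `N`;
`∞` if no such `n` exists. -/
noncomputable def del (M : ModuleCat.{0} A) : ℕ∞ :=
  sInf {e : ℕ∞ | ∃ n : ℕ, e = (n : ℕ∞) ∧
    ∃ (N S T : ModuleCat.{0} A), Module.Finite A N ∧
      IsNthSyzygyOf A n S M ∧ IsNthSyzygyOf A (n + 1) T N ∧ IsStableSummand A S T}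

/-- The sub-derived delooping level: the infimum of `del` over all finitely
generated modules into which `M` embeds. -/
noncomputable def sddel (M : ModuleCat.{0} A) : ℕ∞ :=
  sInf {e : ℕ∞ | ∃ N : ModuleCat.{0} A, Module.Finite A N ∧
    (∃ f : M →ₗ[A] N, Function.Injective f) ∧ del A N = e}


/-!
Right multiplication by `u e₁` maps `P₁ = C e₁` into itself. Since `J u = 0` and `N u = 0`, its
kernel is `rad P₁ = [[J, 0], [N, 0]]`, which is the unique maximal submodule of `P₁` because any
element of `P₁` with a unit in the corner generates `P₁`; hence its image `U` is isomorphic to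
`S₁ = P₁ / rad P₁`. As `u ∈ J`, `U ⊆ rad P₁` is superfluous, so `P₁ → P₁ / U` is a projective
cover with kernel `U ≅ S₁`. A syzygy of a finitely generated module has delooping level `0`,
witnessed by `n = 0` and the identity as stable splitting.
-/

instance IsLocalRing.toIsDedekindFiniteMonoid {R : Type*} [Ring R] [IsLocalRing R] :
    IsDedekindFiniteMonoid R where
  mul_eq_one_symm {a b} hab := by
    have he : IsIdempotentElem (b * a) := by
      rw [IsIdempotentElem, mul_assoc, ← mul_assoc a, hab, one_mul]
    rcases IsLocalRing.isUnit_or_isUnit_of_add_one (add_sub_cancel (b * a) 1) with h | h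
    · exact (IsIdempotentElem.iff_eq_one_of_isUnit h).1 he
    · have hba : b * a = 0 :=
        sub_eq_self.1 ((IsIdempotentElem.iff_eq_one_of_isUnit h).1 he.one_sub)
      have ha : a = 0 := by rw [← one_mul a, ← hab, mul_assoc, hba, mul_zero]
      exact absurd (hab.symm.trans (by rw [ha, zero_mul])) one_ne_zero

theorem setOf_isCoatom_eq_singleton {α : Type*} [PartialOrder α] [OrderTop α] {a : α}
    (ha : a ≠ ⊤) (h : ∀ b, b ≠ ⊤ → b ≤ a) : {b | IsCoatom b} = {a} := by
  ext b
  refine ⟨fun hb => (h b hb.1).eq_of_not_lt fun hlt => ha (hb.2 a hlt), ?_⟩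
  rintro rfl
  exact ⟨ha, fun c hc => by_contra fun hc' => not_lt_of_ge (h c hc') hc⟩

theorem Submodule.mem_span_singleton_iff_mul_eq_self {R : Type*} [Ring R] {e x : R}
    (he : IsIdempotentElem e) : x ∈ span R {e} ↔ x * e = x := by
  refine ⟨fun hx => ?_, fun hx => mem_span_singleton.2 ⟨x, hx⟩⟩
  obtain ⟨a, rfl⟩ := mem_span_singleton.1 hx
  rw [smul_eq_mul, mul_assoc, he.eq]

theorem Module.projective_span_singleton_of_isIdempotentElem {R : Type*} [Ring R] {e : R}
    (he : IsIdempotentElem e) : Module.Projective R (Submodule.span R {e}) := by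
  refine .of_split (Submodule.span R {e}).subtype
    (LinearMap.toSpanSingleton R _ ⟨e, Submodule.mem_span_singleton_self e⟩) ?_
  ext ⟨x, hx⟩
  exact (Submodule.mem_span_singleton_iff_mul_eq_self he).1 hx

theorem del_eq_zero_of_isSyzygyOf {R : Type} [Ring R] {M X : ModuleCat.{0} R}
    [Module.Finite R X] (h : IsSyzygyOf R M X) : del R M = 0 := by
  refine nonpos_iff_eq_zero.1 (sInf_le ⟨0, rfl, X, M, M, ‹_›, ⟨.refl R M⟩, ⟨M, h, ⟨.refl R M⟩⟩,
    LinearMap.id, LinearMap.id, ModuleCat.of R R, inferInstance, 0, 0, ?_⟩)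
  simp

namespace LTri

section

variable {R S N : Type}

theorem ext_iff {x y : LTri R S N} : x = y ↔ x.1 = y.1 ∧ x.2.1 = y.2.1 ∧ x.2.2 = y.2.2 :=
  Prod.ext_iff.trans (and_congr_right' Prod.ext_iff)

@[simp] theorem fst_mk (r : R) (n : N) (s : S) : (LTri.mk R S N r n s).1 = r := rfl

@[simp] theorem snd_fst_mk (r : R) (n : N) (s : S) : (LTri.mk R S N r n s).2.1 = n := rfl

@[simp] theorem snd_snd_mk (r : R) (n : N) (s : S) : (LTri.mk R S N r n s).2.2 = s := rfl

variable [Ring R] [Ring S] [AddCommGroup N] [Module S N] [Module Rᵐᵒᵖ N] [SMulCommClass S Rᵐᵒᵖ N]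

@[simp] theorem fst_zero : (0 : LTri R S N).1 = 0 := rfl

@[simp] theorem snd_fst_zero : (0 : LTri R S N).2.1 = 0 := rfl

@[simp] theorem snd_snd_zero : (0 : LTri R S N).2.2 = 0 := rfl

@[simp] theorem fst_mul (x y : LTri R S N) : (x * y).1 = x.1 * y.1 := rfl

@[simp] theorem snd_fst_mul (x y : LTri R S N) :
    (x * y).2.1 = op y.1 • x.2.1 + x.2.2 • y.2.1 := rfl

@[simp] theorem snd_snd_mul (x y : LTri R S N) : (x * y).2.2 = x.2.2 * y.2.2 := rfl

theorem isIdempotentElem_e₁ : IsIdempotentElem (LTri.mk R S N 1 0 0) := by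
  simp [IsIdempotentElem, ext_iff]

theorem mem_span_e₁ {x : LTri R S N} :
    x ∈ Submodule.span (LTri R S N) {LTri.mk R S N 1 0 0} ↔ x.2.2 = 0 := by
  simp [Submodule.mem_span_singleton_iff_mul_eq_self isIdempotentElem_e₁, ext_iff, eq_comm]

theorem exists_mul_eq_of_isUnit_fst {x y : LTri R S N} (hx : IsUnit x.1) (hy : y.2.2 = 0) :
    ∃ c : LTri R S N, c * x = y := by
  obtain ⟨v, hv⟩ := hx
  refine ⟨LTri.mk R S N (y.1 * ↑v⁻¹) (op (↑v⁻¹ : R) • y.2.1) 0, ext_iff.2 ⟨?_, ?_, ?_⟩⟩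
  · simp [← hv, mul_assoc]
  · simp [← hv, smul_smul, ← op_mul]
  · simp [hy]

end

section

variable {Λ S N : Type} [Ring Λ] [Ring S]
  [AddCommGroup N] [Module S N] [Module Λᵐᵒᵖ N] [SMulCommClass S Λᵐᵒᵖ N]

local notation "C" => LTri Λ S N
local notation "P₁" => Submodule.span (LTri Λ S N) {LTri.mk Λ S N 1 0 0}

theorem eq_top_of_mem_of_isUnit_fst {L : Submodule C P₁} {x : P₁} (hxL : x ∈ L)
    (hx : IsUnit (x : C).1) : L = ⊤ :=
  eq_top_iff.2 fun y _ => by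
    obtain ⟨c, hc⟩ := exists_mul_eq_of_isUnit_fst hx (mem_span_e₁.1 y.2)
    have hcx : c • x = y := Subtype.ext hc
    exact hcx ▸ L.smul_mem c hxL

variable (u : Λ)

variable (S N) in
def mulRightP₁ : P₁ →ₗ[C] P₁ :=
  LinearMap.toSpanSingleton C P₁ ⟨LTri.mk Λ S N u 0 0, mem_span_e₁.2 rfl⟩ ∘ₗ Submodule.subtype _

theorem mulRightP₁_eq_zero_iff (hNu : ∀ n : N, op u • n = 0) (x : P₁) :
    mulRightP₁ S N u x = 0 ↔ (x : C).1 * u = 0 := by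
  rw [← Subtype.val_inj]
  simp [mulRightP₁, ext_iff, hNu]

variable [IsLocalRing Λ]

-- `rad P₁ = [[J, 0], [N, 0]]`, where `J` is the set of nonunits of `Λ`.
def radP₁ : Submodule C P₁ where
  carrier := {x | (x : C).1 ∈ nonunits Λ}
  add_mem' := IsLocalRing.nonunits_add
  zero_mem' := zero_mem_nonunits.2 zero_ne_one
  smul_mem' _ _ hx := mt isUnit_of_mul_isUnit_right hx

theorem le_radP₁_of_ne_top {L : Submodule C P₁} (hL : L ≠ ⊤) : L ≤ radP₁ :=
  fun _ hxL hx => hL (eq_top_of_mem_of_isUnit_fst hxL hx)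

theorem radP₁_ne_top : (radP₁ : Submodule C P₁) ≠ ⊤ := fun h =>
  (h ▸ Submodule.mem_top : (⟨_, Submodule.mem_span_singleton_self _⟩ : P₁) ∈ radP₁) isUnit_one

theorem sInf_setOf_isCoatom_eq_radP₁ : sInf {m : Submodule C P₁ | IsCoatom m} = radP₁ := by
  rw [setOf_isCoatom_eq_singleton radP₁_ne_top fun _ => le_radP₁_of_ne_top, sInf_singleton]

theorem eq_top_of_sup_eq_top_of_le_radP₁ {U L : Submodule C P₁} (hU : U ≤ radP₁)
    (h : U ⊔ L = ⊤) : L = ⊤ :=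
  by_contra fun hL => radP₁_ne_top (top_le_iff.1 (h ▸ sup_le hU (le_radP₁_of_ne_top hL)))

theorem ker_mulRightP₁ (hu0 : u ≠ 0) (hJu : ∀ a : Λ, ¬ IsUnit a → a * u = 0)
    (hNu : ∀ n : N, op u • n = 0) : LinearMap.ker (mulRightP₁ S N u) = radP₁ := by
  ext x
  rw [LinearMap.mem_ker, mulRightP₁_eq_zero_iff u hNu]
  exact ⟨fun h hx => hu0 ((hx.mul_right_eq_zero).1 h), hJu _⟩

theorem range_mulRightP₁_le (huJ : ¬ IsUnit u) :
    LinearMap.range (mulRightP₁ S N u) ≤ radP₁ := by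
  rintro _ ⟨x, rfl⟩
  exact mt isUnit_of_mul_isUnit_right huJ

theorem isProjCover_mkQ_range_mulRightP₁ (huJ : ¬ IsUnit u) :
    IsProjCover C (LinearMap.range (mulRightP₁ S N u)).mkQ :=
  ⟨Module.projective_span_singleton_of_isIdempotentElem isIdempotentElem_e₁,
    Submodule.mkQ_surjective _, fun _ hL => eq_top_of_sup_eq_top_of_le_radP₁
      (range_mulRightP₁_le u huJ) (by rwa [Submodule.ker_mkQ] at hL)⟩

theorem isSyzygyOf_quotient_sInf_coatoms (hu0 : u ≠ 0) (huJ : ¬ IsUnit u)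
    (hJu : ∀ a : Λ, ¬ IsUnit a → a * u = 0) (hNu : ∀ n : N, op u • n = 0) :
    IsSyzygyOf C (ModuleCat.of C (P₁ ⧸ sInf {m : Submodule C P₁ | IsCoatom m}))
      (ModuleCat.of C (P₁ ⧸ LinearMap.range (mulRightP₁ S N u))) :=
  ⟨ModuleCat.of C P₁, _, isProjCover_mkQ_range_mulRightP₁ u huJ,
    ⟨Submodule.quotEquivOfEq _ _ (sInf_setOf_isCoatom_eq_radP₁.trans
        (ker_mulRightP₁ (S := S) u hu0 hJu hNu).symm) ≪≫ₗ
      (mulRightP₁ S N u).quotKerEquivRange ≪≫ₗ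
      LinearEquiv.ofEq _ _ (Submodule.ker_mkQ _).symm⟩⟩

end

end LTri

theorem stmt18_general (k : Type) [Field k] (Λ : Type) [Ring Λ]
    [IsLocalRing Λ]
    -- u is a nonzero element of the radical J (= the set of nonunits) with J·u = 0
    (u : Λ) (hu0 : u ≠ 0) (huJ : ¬ IsUnit u)
    (hJu : ∀ a : Λ, ¬ IsUnit a → a * u = 0)
    -- N is a (k,Λ)-bimodule, finite-dimensional over k, with N·u = 0
    (N : Type) [AddCommGroup N] [Module k N] [Module Λᵐᵒᵖ N]
    [SMulCommClass k Λᵐᵒᵖ N]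
    (hNu : ∀ n : N, MulOpposite.op u • n = 0) :
    -- For C = [[Λ,0],[N,k]], the simple top S₁ of P₁ = C·e₁ is a first syzygy
    -- of some finitely generated C-module X; consequently del_C(S₁) = 0.
    (∃ X : ModuleCat.{0} (LTri Λ k N), Module.Finite (LTri Λ k N) X ∧
      IsSyzygyOf (LTri Λ k N)
        (ModuleCat.of (LTri Λ k N)
          (Submodule.span (LTri Λ k N) {LTri.mk Λ k N 1 0 0} ⧸
            sInf {m : Submodule (LTri Λ k N)
              (Submodule.span (LTri Λ k N) {LTri.mk Λ k N 1 0 0}) | IsCoatom m}))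
        X) ∧
    del (LTri Λ k N)
      (ModuleCat.of (LTri Λ k N)
        (Submodule.span (LTri Λ k N) {LTri.mk Λ k N 1 0 0} ⧸
          sInf {m : Submodule (LTri Λ k N)
            (Submodule.span (LTri Λ k N) {LTri.mk Λ k N 1 0 0}) | IsCoatom m})) = 0 := by
  have hS₁ := LTri.isSyzygyOf_quotient_sInf_coatoms (S := k) u hu0 huJ hJu hNu
  exact ⟨⟨_, inferInstance, hS₁⟩, del_eq_zero_of_isSyzygyOf hS₁⟩

theorem stmt18 (k : Type) [Field k] (Λ : Type) [Ring Λ] [Algebra k Λ]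
    [FiniteDimensional k Λ] [IsLocalRing Λ]
    -- u is a nonzero element of the radical J (= the set of nonunits) with J·u = 0
    (u : Λ) (hu0 : u ≠ 0) (huJ : ¬ IsUnit u)
    (hJu : ∀ a : Λ, ¬ IsUnit a → a * u = 0)
    -- N is a (k,Λ)-bimodule, finite-dimensional over k, with N·u = 0
    (N : Type) [AddCommGroup N] [Module k N] [Module Λᵐᵒᵖ N]
    [SMulCommClass k Λᵐᵒᵖ N] [FiniteDimensional k N]
    (hNu : ∀ n : N, MulOpposite.op u • n = 0) :
    -- For C = [[Λ,0],[N,k]], the simple top S₁ of P₁ = C·e₁ is a first syzygy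
    -- of some finitely generated C-module X; consequently del_C(S₁) = 0.
    (∃ X : ModuleCat.{0} (LTri Λ k N), Module.Finite (LTri Λ k N) X ∧
      IsSyzygyOf (LTri Λ k N)
        (ModuleCat.of (LTri Λ k N)
          (Submodule.span (LTri Λ k N) {LTri.mk Λ k N 1 0 0} ⧸
            sInf {m : Submodule (LTri Λ k N)
              (Submodule.span (LTri Λ k N) {LTri.mk Λ k N 1 0 0}) | IsCoatom m}))
        X) ∧
    del (LTri Λ k N)
      (ModuleCat.of (LTri Λ k N)
        (Submodule.span (LTri Λ k N) {LTri.mk Λ k N 1 0 0} ⧸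
          sInf {m : Submodule (LTri Λ k N)
            (Submodule.span (LTri Λ k N) {LTri.mk Λ k N 1 0 0}) | IsCoatom m})) = 0 :=
  stmt18_general k Λ u hu0 huJ hJu N hNu
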